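/- arXiv:0911.2099 — 2 statements merged into one kernel-verified Lean document; each statement's English description precedes it below -/
import Mathlib

section
/- Let G be a graph on vertices {v_1,...,v_n} with m edges, and let D be an orientation of G in which v_i has out-degree d_i. Then the sum ∑_{A ⊆ E(D)} (-1)^{|A|} ∏_{i=1}^n ∏_{j=1}^{d_i} ((d_A^+(v_i) − d_A^−(v_i)) − j) equals (-1)^m · (|EE(D)| − |EO(D)|) · ∏_{i=1}^n d_i!, where EE(D) (resp. EO(D)) is the set of spanning eulerian subdigraphs of D with an even (resp. odd) number of arcs. -/
open MvPolynomial Finset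

/-- The graph polynomial `P_G = ∏_{(i,j) ∈ E, i < j} (xᵢ - xⱼ)`. -/
noncomputable def graphPoly {V : Type} [Fintype V] [LinearOrder V] (G : SimpleGraph V)
    [DecidableRel G.Adj] : MvPolynomial V ℝ :=
  ∏ p ∈ Finset.univ.filter (fun p : V × V => p.1 < p.2 ∧ G.Adj p.1 p.2), (X p.1 - X p.2)

/-- `G` is Alon–Tarsi `k`-choosable: `P_G` has a monomial with non-zero coefficient all of whose
exponents are at most `k - 1`. -/
def IsAT {V : Type} [Fintype V] [LinearOrder V] (G : SimpleGraph V) [DecidableRel G.Adj]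
    (k : ℕ) : Prop :=
  ∃ t : V →₀ ℕ, (graphPoly G).coeff t ≠ 0 ∧ ∀ i, t i + 1 ≤ k

/-- The Alon–Tarsi number of `G`: the least `k` such that `G` is Alon–Tarsi `k`-choosable. -/
noncomputable def ATnum {V : Type} [Fintype V] [LinearOrder V] (G : SimpleGraph V)
    [DecidableRel G.Adj] : ℕ :=
  sInf {k | IsAT G k}

/-- Out-degree of `v` in a set `A` of arcs. -/
def outdeg {n : ℕ} (A : Finset (Fin n × Fin n)) (v : Fin n) : ℕ :=
  (A.filter fun e => e.1 = v).card

/-- In-degree of `v` in a set `A` of arcs. -/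
def indeg {n : ℕ} (A : Finset (Fin n × Fin n)) (v : Fin n) : ℕ :=
  (A.filter fun e => e.2 = v).card

lemma sum_outdeg {n : ℕ} (A : Finset (Fin n × Fin n)) : ∑ v, outdeg A v = A.card :=
  (Finset.card_eq_sum_card_fiberwise (f := Prod.fst) (fun e _ => Finset.mem_univ e.1)).symm

lemma sum_indeg {n : ℕ} (A : Finset (Fin n × Fin n)) : ∑ v, indeg A v = A.card :=
  (Finset.card_eq_sum_card_fiberwise (f := Prod.snd) (fun e _ => Finset.mem_univ e.2)).symm

lemma outdeg_mono {n : ℕ} {A B : Finset (Fin n × Fin n)} (h : A ⊆ B) (v : Fin n) :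
    outdeg A v ≤ outdeg B v :=
  Finset.card_le_card (Finset.filter_subset_filter _ h)

lemma exists_gt {n : ℕ} (A : Finset (Fin n × Fin n))
    (h : ¬ ∀ v, outdeg A v = indeg A v) : ∃ w, indeg A w < outdeg A w := by
  by_contra hc
  push_neg at hc
  push_neg at h
  obtain ⟨v, hv⟩ := h
  have hlt : outdeg A v < indeg A v := lt_of_le_of_ne (hc v) hv
  have : ∑ w, outdeg A w < ∑ w, indeg A w :=
    Finset.sum_lt_sum (fun w _ => hc w) ⟨v, Finset.mem_univ v, hlt⟩
  rw [sum_outdeg, sum_indeg] at this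
  exact lt_irrefl _ this

lemma prod_factorial (m : ℕ) : ∏ j ∈ Finset.range m, (-(1:ℝ) - j) = (-1)^m * m.factorial := by
  induction m with
  | zero => simp
  | succ k ih =>
    rw [Finset.prod_range_succ, ih, Nat.factorial_succ, pow_succ]
    push_cast
    ring

lemma eulerian_prod {n : ℕ} (A : Finset (Fin n × Fin n)) (d : Fin n → ℕ)
    (h : ∀ v, outdeg A v = indeg A v) (hs : ∑ i, d i = (m : ℕ)) :
    ∏ i, ∏ j ∈ Finset.range (d i), (((outdeg A i : ℝ) - (indeg A i : ℝ)) - ((j : ℝ) + 1)) =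
    (-1:ℝ)^m * ∏ i, (Nat.factorial (d i) : ℝ) := by
  have : ∀ i : Fin n, ∏ j ∈ Finset.range (d i),
      (((outdeg A i : ℝ) - (indeg A i : ℝ)) - ((j : ℝ) + 1)) =
      (-1:ℝ)^(d i) * (Nat.factorial (d i) : ℝ) := by
    intro i
    rw [h i]
    have := prod_factorial (d i)
    rw [← this]
    apply Finset.prod_congr rfl
    intro j _
    ring
  rw [Finset.prod_congr rfl (fun i _ => this i), Finset.prod_mul_distrib,
    Finset.prod_pow_eq_pow_sum, hs]

lemma noneul_prod {n : ℕ} (A D : Finset (Fin n × Fin n)) (hA : A ⊆ D) (d : Fin n → ℕ)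
    (hd : ∀ v, outdeg D v = d v)
    (h : ¬ ∀ v, outdeg A v = indeg A v) :
    ∏ i, ∏ j ∈ Finset.range (d i), (((outdeg A i : ℝ) - (indeg A i : ℝ)) - ((j : ℝ) + 1)) = 0 := by
  obtain ⟨w, hw⟩ := exists_gt A h
  apply Finset.prod_eq_zero (Finset.mem_univ w)
  have hle : outdeg A w ≤ d w := (hd w) ▸ outdeg_mono hA w
  set k := outdeg A w - indeg A w with hk
  have hk1 : 1 ≤ k := by omega
  have hkd : k - 1 < d w := by omega
  apply Finset.prod_eq_zero (Finset.mem_range.mpr hkd)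
  have : ((k - 1 : ℕ) : ℝ) + 1 = (k : ℝ) := by
    have : k - 1 + 1 = k := Nat.succ_pred_eq_of_pos hk1
    exact_mod_cast congrArg (Nat.cast : ℕ → ℝ) this
  rw [this, hk]
  have hin : indeg A w ≤ outdeg A w := le_of_lt hw
  push_cast [Nat.cast_sub hin]
  ring

lemma sum_neg_one_pow {α : Type*} (S : Finset α) (c : α → ℕ) :
    ∑ a ∈ S, (-1:ℝ)^(c a) =
      ((S.filter fun a => Even (c a)).card : ℝ) - ((S.filter fun a => Odd (c a)).card : ℝ) := by
  rw [← Finset.sum_filter_add_sum_filter_not S (fun a => Even (c a))]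
  have h1 : ∑ a ∈ S.filter (fun a => Even (c a)), (-1:ℝ)^(c a) =
      ((S.filter fun a => Even (c a)).card : ℝ) := by
    rw [Finset.sum_congr rfl (fun a ha => Even.neg_one_pow (Finset.mem_filter.mp ha).2)]
    simp
  have h2 : ∑ a ∈ S.filter (fun a => ¬ Even (c a)), (-1:ℝ)^(c a) =
      -((S.filter fun a => Odd (c a)).card : ℝ) := by
    have he : S.filter (fun a => ¬ Even (c a)) = S.filter (fun a => Odd (c a)) := by
      apply Finset.filter_congr
      intro a _
      exact Nat.not_even_iff_odd
    rw [he, Finset.sum_congr rfl (fun a ha => Odd.neg_one_pow (Finset.mem_filter.mp ha).2)]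
    simp
  rw [h1, h2]
  ring

/-- With the weights `u^i_j = j` (`j = 1,…,dᵢ`), the weighted sum over arc subsets equals
`(-1)^m (|EE(D)| - |EO(D)|) ∏ᵢ dᵢ!`, where `EE(D)` (resp. `EO(D)`) is the set of spanning
eulerian subdigraphs of `D` with an even (resp. odd) number of arcs. -/
theorem weighted_sum_eq_eulerian_count (n : ℕ) (G : SimpleGraph (Fin n)) [DecidableRel G.Adj]
    (D : Finset (Fin n × Fin n))
    (hD1 : ∀ e ∈ D, G.Adj e.1 e.2)
    (hD2 : ∀ i j, G.Adj i j → ((i, j) ∈ D ∨ (j, i) ∈ D))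
    (hD3 : ∀ i j, (i, j) ∈ D → (j, i) ∉ D)
    (d : Fin n → ℕ) (hd : ∀ v, outdeg D v = d v) :
    ∑ A ∈ D.powerset, (-1 : ℝ) ^ A.card *
        ∏ i, ∏ j ∈ Finset.range (d i),
          (((outdeg A i : ℝ) - (indeg A i : ℝ)) - ((j : ℝ) + 1)) =
      (-1 : ℝ) ^ D.card *
        (((D.powerset.filter fun A => (∀ v, outdeg A v = indeg A v) ∧ Even A.card).card : ℝ) -
          ((D.powerset.filter fun A => (∀ v, outdeg A v = indeg A v) ∧ Odd A.card).card : ℝ)) *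
        ∏ i, (Nat.factorial (d i) : ℝ) := by
  have hsumd : ∑ i, d i = D.card := by
    calc ∑ i, d i = ∑ i, outdeg D i := by simp [hd]
    _ = D.card := sum_outdeg D
  set C : ℝ := (-1:ℝ)^D.card * ∏ i, (Nat.factorial (d i) : ℝ) with hC
  have step : ∀ A ∈ D.powerset, (-1:ℝ)^A.card *
      ∏ i, ∏ j ∈ Finset.range (d i),
        (((outdeg A i : ℝ) - (indeg A i : ℝ)) - ((j : ℝ) + 1)) =
      if (∀ v, outdeg A v = indeg A v) then (-1:ℝ)^A.card * C else 0 := by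
    intro A hA
    by_cases h : ∀ v, outdeg A v = indeg A v
    · rw [if_pos h, eulerian_prod A d h hsumd, hC]
    · rw [if_neg h, noneul_prod A D (Finset.mem_powerset.mp hA) d hd h, mul_zero]
  rw [Finset.sum_congr rfl step, ← Finset.sum_filter]
  rw [← Finset.sum_mul, sum_neg_one_pow]
  rw [Finset.filter_filter, Finset.filter_filter]
  rw [hC]
  ring
end

section
/- Let K_{2*n} denote the complete multipartite graph with n parts each of size 2. Then AT(K_{2*n}) = n. -/
open MvPolynomial Finset

/-- The complete multipartite graph `K_{2*n}` with `n` parts each of size `2`: vertices are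
`Fin (2 * n)`, the parts are `{2i, 2i+1}`, and two vertices are adjacent iff they lie in
different parts. -/
def K2n (n : ℕ) : SimpleGraph (Fin (2 * n)) :=
  SimpleGraph.fromRel fun i j => (i : ℕ) / 2 ≠ (j : ℕ) / 2

instance (n : ℕ) : DecidableRel (K2n n).Adj := fun i j =>
  decidable_of_iff _ (SimpleGraph.fromRel_adj _ i j).symm

/-!
The graph polynomial of `K_{2*n}` is homogeneous of degree `|E| = 2n(n-1)`, so a monomial all of
whose exponents are at most `k - 1` forces `2n(n-1) ≤ 2n(k-1)`, i.e. `n ≤ k`.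

Conversely, the coefficient of `∏ᵥ xᵥ^(n-1)` is nonzero. Summing `P_G(c)` over the grid
`c ∈ {0, …, n-1}^{2n}` with weights `∏ᵥ (-1)^(n-1-cᵥ) (n-1).choose cᵥ` applies the `(n-1)`-st
forward difference in every variable: it kills every other monomial of degree `2n(n-1)` and multiplies
this one by `((n-1)!)^{2n}`. `P_G(c)` vanishes unless `c` is a proper colouring, and a proper
`n`-colouring of `K_{2*n}` is constant on the parts with pairwise distinct values `g a`, where
`P_G(c) = ∏_{a<b} (g a - g b)^4 > 0` and the weight is a product of squares. Hence the weighted sum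
is positive.
-/

open scoped Nat

/-- `∑ m ∈ range (d + 1), diffWeight d m • f m` is the forward difference `Δ^[d] f 0`. -/
def diffWeight (d m : ℕ) : ℤ := (-1) ^ (d - m) * d.choose m

lemma diffWeight_ne_zero {d m : ℕ} (h : m ≤ d) : diffWeight d m ≠ 0 :=
  mul_ne_zero (pow_ne_zero _ (by norm_num)) (by exact_mod_cast (Nat.choose_pos h).ne')

section GridCoefficient

variable {R : Type*} [CommRing R]

lemma sum_diffWeight_mul_pow {d e : ℕ} (he : e ≤ d) :
    ∑ m : Fin (d + 1), (diffWeight d m : R) * ((m : ℕ) : R) ^ e =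
      if e = d then (d ! : R) else 0 := by
  have h := fwdDiff_iter_eq_sum_shift (h := (1 : R)) (fun r : R => r ^ e) d 0
  simp only [zero_add, nsmul_one, zsmul_eq_mul, Int.cast_mul, Int.cast_pow, Int.cast_neg,
    Int.cast_one, Int.cast_natCast] at h
  rw [Fin.sum_univ_eq_sum_range (fun m => (diffWeight d m : R) * (m : R) ^ e)]
  simp only [diffWeight, Int.cast_mul, Int.cast_pow, Int.cast_neg, Int.cast_one, Int.cast_natCast,
    ← h]
  split_ifs with hed
  · subst hed
    rw [fwdDiff_iter_eq_factorial, Pi.natCast_apply]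
  · rw [fwdDiff_iter_pow_eq_zero_of_lt (lt_of_le_of_ne he hed), Pi.zero_apply]

theorem sum_prod_diffWeight_mul_eval {σ : Type*} [Fintype σ] [DecidableEq σ] {d : ℕ}
    {P : MvPolynomial σ R} (hP : P.totalDegree ≤ Fintype.card σ * d) :
    ∑ c : σ → Fin (d + 1), (∏ v, (diffWeight d (c v) : R)) * eval (fun v => ((c v : ℕ) : R)) P =
      (d ! : R) ^ Fintype.card σ * P.coeff (Finsupp.equivFunOnFinite.symm fun _ => d) := by
  set S : ℕ → R := fun e => ∑ m : Fin (d + 1), (diffWeight d m : R) * ((m : ℕ) : R) ^ e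
  have hexpand : ∀ c : σ → Fin (d + 1),
      (∏ v, (diffWeight d (c v) : R)) * eval (fun v => ((c v : ℕ) : R)) P =
        ∑ t ∈ P.support, P.coeff t * ∏ v, (diffWeight d (c v) : R) * ((c v : ℕ) : R) ^ t v := by
    intro c
    rw [eval_eq', Finset.mul_sum]
    refine sum_congr rfl fun t _ => ?_
    rw [prod_mul_distrib]
    ring
  have hlt : ∀ t ∈ P.support, t ≠ Finsupp.equivFunOnFinite.symm (fun _ => d) → ∃ v, t v < d := by
    intro t ht hne
    by_contra! hge
    have hsum : ∑ v, t v ≤ ∑ _v : σ, d := by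
      rw [sum_const, Finset.card_univ, smul_eq_mul,
        ← Finsupp.sum_fintype t (fun _ e => e) fun _ => rfl]
      exact (le_totalDegree ht).trans hP
    refine hne (Finsupp.ext fun v => ?_)
    exact ((sum_eq_sum_iff_of_le fun v _ => hge v).mp ((sum_le_sum fun v _ => hge v).antisymm hsum)
      v (mem_univ v)).symm
  calc ∑ c : σ → Fin (d + 1), (∏ v, (diffWeight d (c v) : R)) * eval (fun v => ((c v : ℕ) : R)) P
      = ∑ t ∈ P.support, P.coeff t * ∏ v, S (t v) := by
        rw [sum_congr rfl fun c _ => hexpand c, sum_comm]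
        refine sum_congr rfl fun t _ => ?_
        rw [← mul_sum, Fintype.prod_sum]
    _ = (d ! : R) ^ Fintype.card σ * P.coeff (Finsupp.equivFunOnFinite.symm fun _ => d) := by
        rw [sum_eq_single (Finsupp.equivFunOnFinite.symm fun _ => d)]
        · simp [S, sum_diffWeight_mul_pow le_rfl, mul_comm]
        · intro t ht hne
          obtain ⟨v, hv⟩ := hlt t ht hne
          rw [prod_eq_zero (mem_univ v) (by simp [S, sum_diffWeight_mul_pow hv.le, hv.ne]),
            mul_zero]
        · intro h
          rw [notMem_support_iff.mp h, zero_mul]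

end GridCoefficient

section GraphPoly

variable {V : Type} [Fintype V] [LinearOrder V] (G : SimpleGraph V) [DecidableRel G.Adj]

def ascEdges : Finset (V × V) := {p | p.1 < p.2 ∧ G.Adj p.1 p.2}

lemma graphPoly_eq_prod_ascEdges : graphPoly G = ∏ p ∈ ascEdges G, (X p.1 - X p.2) := rfl

lemma isHomogeneous_graphPoly : (graphPoly G).IsHomogeneous #(ascEdges G) := by
  rw [graphPoly_eq_prod_ascEdges]
  simpa using IsHomogeneous.prod (ascEdges G) (fun p => (X p.1 - X p.2 : MvPolynomial V ℝ))
    (fun _ => 1) fun p _ => (isHomogeneous_X _ _).sub (isHomogeneous_X _ _)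

lemma eval_graphPoly (x : V → ℝ) : eval x (graphPoly G) = ∏ p ∈ ascEdges G, (x p.1 - x p.2) := by
  simp [graphPoly_eq_prod_ascEdges, map_prod]

variable {G} in
lemma eval_graphPoly_eq_zero {x : V → ℝ} {i j : V} (hij : G.Adj i j) (hx : x i = x j) :
    eval x (graphPoly G) = 0 := by
  rw [eval_graphPoly]
  rcases lt_or_gt_of_ne hij.ne with h | h
  · exact prod_eq_zero (i := (i, j)) (by simp [ascEdges, h, hij]) (by simp [hx])
  · exact prod_eq_zero (i := (j, i)) (by simp [ascEdges, h, hij.symm]) (by simp [hx])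

lemma isAT_zero_of_isEmpty [IsEmpty V] : IsAT G 0 :=
  ⟨0, by simp [graphPoly_eq_prod_ascEdges, ascEdges], isEmptyElim⟩

variable {G} in
lemma IsAT.card_ascEdges_add_card_le {k : ℕ} (h : IsAT G k) :
    #(ascEdges G) + Fintype.card V ≤ Fintype.card V * k := by
  obtain ⟨t, ht, htk⟩ := h
  have hdeg : ∑ v, t v = #(ascEdges G) := by
    rw [← Finsupp.degree_eq_sum, Finsupp.degree_apply,
      (isHomogeneous_graphPoly G).degree_eq_sum_deg_support (mem_support_iff.mpr ht)]
  calc #(ascEdges G) + Fintype.card V = ∑ v, (t v + 1) := by simp [sum_add_distrib, hdeg]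
    _ ≤ ∑ _v : V, k := sum_le_sum fun v _ => htk v
    _ = Fintype.card V * k := by simp

end GraphPoly

namespace K2n

variable {n : ℕ}

def splitEquiv : Fin (2 * n) ≃ Fin n × Fin 2 where
  toFun v := (⟨v / 2, by omega⟩, ⟨v % 2, by omega⟩)
  invFun x := ⟨2 * x.1 + x.2, by omega⟩
  left_inv v := by ext; simp only; omega
  right_inv x := by ext <;> simp only <;> omega

def part (v : Fin (2 * n)) : Fin n := (splitEquiv v).1

@[simp] lemma part_splitEquiv_symm (x : Fin n × Fin 2) : part (splitEquiv.symm x) = x.1 := by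
  simp [part]

lemma adj_iff {i j : Fin (2 * n)} : (K2n n).Adj i j ↔ part i ≠ part j := by
  simp only [K2n, SimpleGraph.fromRel_adj, part, splitEquiv, Equiv.coe_fn_mk, ne_eq, Fin.ext_iff]
  constructor
  · rintro ⟨-, h | h⟩ <;> omega
  · intro h; exact ⟨fun hij => h (by rw [hij]), Or.inl h⟩

def edgeEquiv : Fin (2 * n) × Fin (2 * n) ≃ (Fin n × Fin n) × (Fin 2 × Fin 2) :=
  (splitEquiv.prodCongr splitEquiv).trans (Equiv.prodProdProdComm _ _ _ _)

lemma mem_ascEdges_iff (p : Fin (2 * n) × Fin (2 * n)) :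
    p ∈ ascEdges (K2n n) ↔ edgeEquiv p ∈ ({q | q.1 < q.2} : Finset (Fin n × Fin n)) ×ˢ univ := by
  simp only [ascEdges, mem_filter, mem_univ, true_and, mem_product, and_true, adj_iff]
  simp only [edgeEquiv, part, splitEquiv, Equiv.trans_apply, Equiv.prodCongr_apply,
    Equiv.coe_fn_mk, Prod.map, Equiv.prodProdProdComm_apply, Fin.lt_def, ne_eq, Fin.ext_iff]
  omega

lemma card_ascEdges : #(ascEdges (K2n n)) = 2 * n * (n - 1) := by
  rw [card_equiv edgeEquiv mem_ascEdges_iff, card_product, Fintype.card_product_filter_lt,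
    Fintype.card_fin, Finset.card_univ, Fintype.card_prod, Fintype.card_fin, Nat.choose_two_right,
    mul_assoc]
  obtain ⟨k, hk⟩ := Nat.even_mul_pred_self n
  omega

lemma prod_ascEdges {M : Type*} [CommMonoid M] (f : Fin (2 * n) × Fin (2 * n) → M) :
    ∏ p ∈ ascEdges (K2n n), f p =
      ∏ q ∈ ({q | q.1 < q.2} : Finset (Fin n × Fin n)), ∏ st : Fin 2 × Fin 2,
        f (edgeEquiv.symm (q, st)) := by
  rw [← prod_product']
  exact prod_equiv edgeEquiv mem_ascEdges_iff fun p _ => by simp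

lemma eval_graphPoly_comp_part (x : Fin n → ℝ) :
    eval (x ∘ part) (graphPoly (K2n n)) =
      ∏ q ∈ ({q | q.1 < q.2} : Finset (Fin n × Fin n)), (x q.1 - x q.2) ^ 4 := by
  rw [eval_graphPoly, prod_ascEdges]
  refine prod_congr rfl fun q _ => ?_
  simp [edgeEquiv]

lemma eq_comp_part_of_proper (c : Fin (2 * n) → Fin n)
    (hc : ∀ i j, (K2n n).Adj i j → c i ≠ c j) :
    ∃ g : Fin n → Fin n, Function.Injective g ∧ c = g ∘ part := by
  set g : Fin n → Fin n := fun a => c (splitEquiv.symm (a, 0))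
  have hg : Function.Injective g := fun a b hab => by
    by_contra hne
    exact hc _ _ (by simpa [adj_iff] using hne) hab
  refine ⟨g, hg, funext fun v => ?_⟩
  obtain ⟨b, hb⟩ := Finite.surjective_of_injective hg (c v)
  have : b = part v := by
    by_contra hne
    exact hc _ _ (by simpa [adj_iff] using hne) hb
  simp [← hb, this]

lemma prod_comp_part_pos (f : Fin n → ℤ) (hf : ∀ a, f a ≠ 0) : 0 < ∏ v, f (part v) := by
  rw [← splitEquiv.symm.prod_comp, Fintype.prod_prod_type]
  refine prod_pos fun a _ => ?_
  simpa only [Fin.prod_univ_two, part_splitEquiv_symm] using mul_self_pos.mpr (hf a)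

lemma le_of_isAT {k : ℕ} (h : IsAT (K2n n) k) : n ≤ k := by
  have := h.card_ascEdges_add_card_le
  rw [card_ascEdges, Fintype.card_fin] at this
  rcases n with _ | n
  · exact Nat.zero_le k
  · exact Nat.le_of_mul_le_mul_left (by simpa [mul_add] using this) (by positivity)

theorem isAT_succ (N : ℕ) : IsAT (K2n (N + 1)) (N + 1) := by
  set P := graphPoly (K2n (N + 1))
  set term : (Fin (2 * (N + 1)) → Fin (N + 1)) → ℝ := fun c =>
    (∏ v, (diffWeight N (c v) : ℝ)) * eval (fun v => ((c v : ℕ) : ℝ)) P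
  have hproper : ∀ g : Fin (N + 1) → Fin (N + 1), Function.Injective g → 0 < term (g ∘ part) := by
    intro g hg
    refine mul_pos ?_ ?_
    · exact_mod_cast prod_comp_part_pos (fun a => diffWeight N (g a))
        fun a => diffWeight_ne_zero (Nat.lt_succ_iff.mp (g a).isLt)
    · change 0 < eval ((fun a => ((g a : ℕ) : ℝ)) ∘ part) P
      rw [eval_graphPoly_comp_part]
      refine prod_pos fun q hq => Even.pow_pos (by decide) (sub_ne_zero.mpr ?_)
      simpa [Fin.val_inj, hg.eq_iff] using (mem_filter.mp hq).2.ne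
  have hnonneg : ∀ c, 0 ≤ term c := by
    intro c
    by_cases hc : ∀ i j, (K2n (N + 1)).Adj i j → c i ≠ c j
    · obtain ⟨g, hg, rfl⟩ := eq_comp_part_of_proper c hc
      exact (hproper g hg).le
    · push Not at hc
      obtain ⟨i, j, hij, hcij⟩ := hc
      have h0 : eval (fun v => ((c v : ℕ) : ℝ)) P = 0 := eval_graphPoly_eq_zero hij (by simp [hcij])
      simp [term, h0]
  have hdeg : P.totalDegree ≤ Fintype.card (Fin (2 * (N + 1))) * N := by
    simpa [card_ascEdges] using (isHomogeneous_graphPoly (K2n (N + 1))).totalDegree_le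
  have hsum : 0 < ∑ c, term c :=
    sum_pos' (fun c _ => hnonneg c) ⟨part, mem_univ _, hproper id Function.injective_id⟩
  rw [sum_prod_diffWeight_mul_eval hdeg] at hsum
  refine ⟨Finsupp.equivFunOnFinite.symm fun _ => N, fun h => ?_, fun _ => by simp⟩
  rw [h, mul_zero] at hsum
  exact hsum.false

end K2n

/-- `AT(K_{2*n}) = n`. -/
theorem AT_K2n (n : ℕ) : ATnum (K2n n) = n := by
  have hAT : IsAT (K2n n) n := by
    rcases n with _ | N
    · have : IsEmpty (Fin (2 * 0)) := Fin.isEmpty'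
      exact isAT_zero_of_isEmpty _
    · exact K2n.isAT_succ N
  exact le_antisymm (Nat.sInf_le hAT)
    (K2n.le_of_isAT (Nat.sInf_mem (s := {k | IsAT (K2n n) k}) ⟨n, hAT⟩))
end
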